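/- arXiv:2307.04652 — 5 statements merged into one kernel-verified Lean document; each statement's English description precedes it below -/
import Mathlib

section
/- Let r < 4 and let c be a circular r-coloring of the all-negative cycle (C_n, −). Then c is a far-polar mapping of C_n: for each i, the points c(v_{i−1}) and c(v_{i+1}) partition the circle O_r into two parts of unequal length, and c(v_i) lies in the strictly larger part. -/
open scoped Classical

/-- The representative in `[0, r)` of a point of the circle `O_r` (of circumference `r`),
i.e. the clockwise arc length from the base point `0`. -/
noncomputable def dlift (r : ℝ) (hr : 0 < r) (x : AddCircle r) : ℝ :=
  haveI : Fact (0 < r) := ⟨hr⟩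
  ((AddCircle.equivIco r 0 x : Set.Ico (0 : ℝ) (0 + r)) : ℝ)

/-- The representative in `(-r/2, r/2]` of a point of the circle `O_r`: the signed length of
the shortest arc from the base point (positive = clockwise). -/
noncomputable def slift (r : ℝ) (hr : 0 < r) (x : AddCircle r) : ℝ :=
  haveI : Fact (0 < r) := ⟨hr⟩
  ((AddCircle.equivIoc r (-(r / 2)) x : Set.Ioc (-(r / 2)) (-(r / 2) + r)) : ℝ)

/-- A mapping `c` of the vertices of the cycle `C_n` to the circle `O_r` is far-polar if for
each `i` the points `c (i-1)` and `c (i+1)` partition `O_r` into two arcs of unequal lengths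
and `c i` lies strictly inside the larger arc.  Here `dlift r hr (c (i+1) - c (i-1))` is the
length of the clockwise arc from `c (i-1)` to `c (i+1)`. -/
def FarPolarCycle (n : ℕ) (r : ℝ) (hr : 0 < r) (c : ZMod n → AddCircle r) : Prop :=
  ∀ i : ZMod n,
    dlift r hr (c (i + 1) - c (i - 1)) ≠ r / 2 ∧
    (if r / 2 < dlift r hr (c (i + 1) - c (i - 1)) then
      0 < dlift r hr (c i - c (i - 1)) ∧
        dlift r hr (c i - c (i - 1)) < dlift r hr (c (i + 1) - c (i - 1))
    else
      dlift r hr (c (i + 1) - c (i - 1)) < dlift r hr (c i - c (i - 1)))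

/-! A clockwise arc between two adjacent colours has length in `[1, r - 1]`. The arc from
`c (i-1)` to `c (i+1)` through `c i` therefore has length `a + b` with `2 ≤ a + b ≤ 2r - 2`.
If `a + b < r`, then `a + b ≥ 2 > r / 2` is the larger arc and contains `c i`; otherwise the
clockwise arc from `c (i-1)` to `c (i+1)` has length `a + b - r ≤ r - 2 < r / 2`, so the larger
arc is the counter-clockwise one, which again contains `c i`. Both use `r < 4`. -/

section dlift

variable {r : ℝ} (hr : 0 < r)

theorem coe_dlift (x : AddCircle r) : ((dlift r hr x : ℝ) : AddCircle r) = x :=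
  AddCircle.coe_equivIco (hp := ⟨hr⟩)

theorem dlift_mem_Ico (x : AddCircle r) : dlift r hr x ∈ Set.Ico 0 r := by
  have h : dlift r hr x ∈ Set.Ico 0 (0 + r) := (AddCircle.equivIco (hp := ⟨hr⟩) r 0 x).2
  rwa [zero_add] at h

theorem dlift_coe_of_mem {y : ℝ} (hy : y ∈ Set.Ico 0 r) : dlift r hr (y : AddCircle r) = y :=
  AddCircle.equivIco_coe_of_mem (hp := ⟨hr⟩) (by rwa [zero_add])

theorem dlift_add (x y : AddCircle r) :
    dlift r hr (x + y) =
      if dlift r hr x + dlift r hr y < r then dlift r hr x + dlift r hr y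
      else dlift r hr x + dlift r hr y - r := by
  obtain ⟨hx0, hxr⟩ := dlift_mem_Ico hr x
  obtain ⟨hy0, hyr⟩ := dlift_mem_Ico hr y
  have hsum : x + y = ((dlift r hr x + dlift r hr y : ℝ) : AddCircle r) := by
    rw [AddCircle.coe_add, coe_dlift, coe_dlift]
  split_ifs with h
  · rw [hsum, dlift_coe_of_mem hr ⟨by linarith, h⟩]
  · rw [hsum, ← sub_zero ((_ : ℝ) : AddCircle r), ← AddCircle.coe_period, ← AddCircle.coe_sub,
      dlift_coe_of_mem hr ⟨by linarith, by linarith⟩]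

theorem dlift_mem_Icc_of_le_norm {d : ℝ} {x : AddCircle r} (h : d ≤ ‖x‖) :
    dlift r hr x ∈ Set.Icc d (r - d) := by
  obtain ⟨h0, hr'⟩ := dlift_mem_Ico hr x
  have hcw : ‖x‖ ≤ |dlift r hr x| := by
    simpa only [coe_dlift, Real.norm_eq_abs] using
      QuotientAddGroup.norm_mk_le_norm (S := AddSubgroup.zmultiples r) (m := dlift r hr x)
  have hccw : ‖x‖ ≤ |dlift r hr x - r| := by
    simpa only [AddCircle.coe_sub, AddCircle.coe_period, sub_zero, coe_dlift, Real.norm_eq_abs] using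
      QuotientAddGroup.norm_mk_le_norm (S := AddSubgroup.zmultiples r) (m := dlift r hr x - r)
  rw [abs_of_nonneg h0] at hcw
  rw [abs_of_neg (by linarith)] at hccw
  constructor <;> linarith

end dlift

/-- `y` lies strictly inside the longer of the two arcs into which `x` and `z` cut `O_r`
(and these arcs have different lengths). -/
def IsFarPolar {r : ℝ} (hr : 0 < r) (x y z : AddCircle r) : Prop :=
  dlift r hr (z - x) ≠ r / 2 ∧
    if r / 2 < dlift r hr (z - x) then
      0 < dlift r hr (y - x) ∧ dlift r hr (y - x) < dlift r hr (z - x)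
    else dlift r hr (z - x) < dlift r hr (y - x)

theorem isFarPolar_of_one_le_dist {r : ℝ} (hr : 0 < r) (hr4 : r < 4) {x y z : AddCircle r}
    (hxy : 1 ≤ dist x y) (hyz : 1 ≤ dist y z) : IsFarPolar hr x y z := by
  obtain ⟨ha1, ha2⟩ := dlift_mem_Icc_of_le_norm hr (hxy.trans_eq (dist_eq_norm' x y))
  obtain ⟨hb1, hb2⟩ := dlift_mem_Icc_of_le_norm hr (hyz.trans_eq (dist_eq_norm' y z))
  rw [IsFarPolar, ← sub_add_sub_cancel' y x z, dlift_add hr]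
  split_ifs <;> refine ⟨by linarith, ?_⟩ <;> first | constructor <;> linarith | linarith

theorem circColoring_farPolar_general (n : ℕ) (r : ℝ) (hr : 0 < r) (hr4 : r < 4)
    (c : ZMod n → AddCircle r) (hc : ∀ i : ZMod n, 1 ≤ dist (c i) (c (i + 1))) :
    FarPolarCycle n r hr c := fun i =>
  isFarPolar_of_one_le_dist hr hr4 (by simpa only [sub_add_cancel] using hc (i - 1)) (hc i)

/-- Any circular `r`-coloring, `r < 4`, of the all-negative cycle `(C_n, -)` is a far-polar
mapping of `C_n`. -/
theorem circColoring_farPolar (n : ℕ) (hn : 3 ≤ n) (r : ℝ) (hr : 0 < r) (hr4 : r < 4)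
    (c : ZMod n → AddCircle r) (hc : ∀ i : ZMod n, 1 ≤ dist (c i) (c (i + 1))) :
    FarPolarCycle n r hr c :=
  circColoring_farPolar_general n r hr hr4 c hc
end

section
/- Let n be even, r < 4, and let c be a circular r-coloring of (C_n, −). Then the winding numbers of the shortest-arc extensions of c restricted to the two components of the exact square C_n^{#2} (the odd-indexed cycle and the even-indexed cycle) have the same parity. -/
open scoped Classical

/-!
Write `t i` for the signed shortest step from `c i` to `c (i + 1)`, so `1 ≤ |t i| ≤ r / 2`.
Rotating the `i`-th vertex by `i` half-turns (which closes up again after `2m` vertices) turns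
every step into a step `v i = t i ∓ r / 2` with `|v i| ≤ r / 2 - 1`. As `r < 4`, two consecutive
rotated steps sum to less than `r / 2` in absolute value, while the two half-turns cancel; hence
the shortest arc from `c i` to `c (i + 2)` is exactly `v i + v (i + 1)`. Summing over both
components of the exact square counts every `v i` twice, so the sum of the two winding numbers
is twice the winding number of the rotated closed walk, and in particular even.
-/

open Finset Function

section
variable {r : ℝ}

noncomputable def twist (p : ℕ → AddCircle r) (i : ℕ) : AddCircle r :=
  p i + i • ((r / 2 : ℝ) : AddCircle r)

lemma two_nsmul_coe_half : 2 • ((r / 2 : ℝ) : AddCircle r) = 0 := by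
  rw [← AddCircle.coe_nsmul, nsmul_eq_mul, Nat.cast_ofNat, mul_div_cancel₀ r two_ne_zero,
    AddCircle.coe_period]

lemma twist_succ_sub (p : ℕ → AddCircle r) (i : ℕ) :
    twist p (i + 1) - twist p i = p (i + 1) - p i + ((r / 2 : ℝ) : AddCircle r) := by
  simp only [twist, succ_nsmul]
  abel

lemma periodic_twist {p : ℕ → AddCircle r} {n : ℕ} (hp : Periodic p (2 * n)) :
    Periodic (twist p) (2 * n) := fun i => by
  rw [twist, twist, hp i, add_nsmul, mul_nsmul, two_nsmul_coe_half, nsmul_zero, add_zero]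

variable (hr : 0 < r)

lemma slift_mem_Ioc (x : AddCircle r) : slift r hr x ∈ Set.Ioc (-(r / 2)) (r / 2) := by
  have : Fact (0 < r) := ⟨hr⟩
  have h : slift r hr x ∈ Set.Ioc (-(r / 2)) (-(r / 2) + r) := (AddCircle.equivIoc r _ x).2
  exact ⟨h.1, by linarith [h.2]⟩

lemma coe_slift (x : AddCircle r) : (slift r hr x : AddCircle r) = x :=
  haveI : Fact (0 < r) := ⟨hr⟩
  AddCircle.coe_equivIoc

lemma slift_coe {y : ℝ} (hy : y ∈ Set.Ioc (-(r / 2)) (r / 2)) : slift r hr y = y :=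
  haveI : Fact (0 < r) := ⟨hr⟩
  AddCircle.equivIoc_coe_of_mem ⟨hy.1, by linarith [hy.2]⟩

lemma slift_add {x y : AddCircle r} (h : |slift r hr x| + |slift r hr y| < r / 2) :
    slift r hr (x + y) = slift r hr x + slift r hr y := by
  have hxy := abs_lt.mp ((abs_add_le _ _).trans_lt h)
  calc slift r hr (x + y) = slift r hr ((slift r hr x + slift r hr y : ℝ) : AddCircle r) := by
        rw [AddCircle.coe_add, coe_slift, coe_slift]
    _ = _ := slift_coe hr ⟨hxy.1, hxy.2.le⟩

lemma norm_coe_le_abs (y : ℝ) : ‖(y : AddCircle r)‖ ≤ |y| :=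
  QuotientAddGroup.norm_mk_le_norm

lemma abs_slift_add_half_le (x : AddCircle r) :
    |slift r hr (x + ((r / 2 : ℝ) : AddCircle r))| ≤ r / 2 - ‖x‖ := by
  set y := slift r hr (x + ((r / 2 : ℝ) : AddCircle r))
  obtain ⟨hy₁, hy₂⟩ := slift_mem_Ioc hr (x + ((r / 2 : ℝ) : AddCircle r))
  have hx : x = ((y - r / 2 : ℝ) : AddCircle r) := by
    rw [AddCircle.coe_sub, coe_slift, add_sub_cancel_right]
  have h₁ := norm_coe_le_abs (r := r) (y - r / 2)
  have h₂ := norm_coe_le_abs (r := r) (y - r / 2 + r)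
  rw [AddCircle.coe_add_period, ← hx] at h₂
  rw [← hx, abs_of_nonpos (by linarith)] at h₁
  rw [abs_of_pos (by linarith)] at h₂
  exact abs_le.mpr ⟨by linarith, by linarith⟩

lemma exists_sum_slift_eq_mul {ι : Type*} (s : Finset ι) (x : ι → AddCircle r)
    (h : ∑ i ∈ s, x i = 0) : ∃ z : ℤ, ∑ i ∈ s, slift r hr (x i) = z * r := by
  have hcoe : ((∑ i ∈ s, slift r hr (x i) : ℝ) : AddCircle r) = 0 := by
    rw [← h, ← sum_congr rfl fun i _ => coe_slift hr (x i)]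
    exact map_sum (QuotientAddGroup.mk' (AddSubgroup.zmultiples r)) _ s
  obtain ⟨z, hz⟩ := (AddCircle.coe_eq_zero_iff r).mp hcoe
  exact ⟨z, by rw [← hz, zsmul_eq_mul]⟩

lemma exists_sum_range_slift_sub_eq_mul (f : ℕ → AddCircle r) {n : ℕ} (hf : f n = f 0) :
    ∃ z : ℤ, ∑ i ∈ range n, slift r hr (f (i + 1) - f i) = z * r :=
  exists_sum_slift_eq_mul hr _ _ (by rw [sum_range_sub, hf, sub_self])

lemma slift_two_step_eq_add (hr4 : r < 4) (p : ℕ → AddCircle r)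
    (hp : ∀ i, 1 ≤ ‖p (i + 1) - p i‖) (i : ℕ) :
    slift r hr (p (i + 2) - p i) =
      slift r hr (twist p (i + 1) - twist p i) +
        slift r hr (twist p (i + 2) - twist p (i + 1)) := by
  have hsmall : ∀ j, |slift r hr (twist p (j + 1) - twist p j)| ≤ r / 2 - 1 := fun j => by
    rw [twist_succ_sub]
    linarith [abs_slift_add_half_le hr (p (j + 1) - p j), hp j]
  rw [← slift_add hr (by linarith [hsmall i, hsmall (i + 1)]), twist_succ_sub, twist_succ_sub,
    add_add_add_comm, ← two_nsmul, two_nsmul_coe_half, add_zero]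
  congr 1
  abel

lemma exists_sum_range_slift_two_step_eq (hr4 : r < 4) (p : ℕ → AddCircle r)
    (hp : ∀ i, 1 ≤ ‖p (i + 1) - p i‖) {n : ℕ} (hper : Periodic p (2 * n)) :
    ∃ w : ℤ, ∑ i ∈ range (2 * n), slift r hr (p (i + 2) - p i) = 2 * w * r := by
  set v : ℕ → ℝ := fun i => slift r hr (twist p (i + 1) - twist p i)
  have htw := periodic_twist hper
  obtain ⟨w, hw⟩ := exists_sum_range_slift_sub_eq_mul hr (twist p) (n := 2 * n)
    (by simpa using htw 0)
  have hv : v (2 * n) = v 0 := by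
    have h₀ := htw 0
    have h₁ := htw 1
    rw [zero_add] at h₀
    rw [add_comm] at h₁
    simp only [v, h₀, h₁]
  have hshift : ∑ i ∈ range (2 * n), v (i + 1) = ∑ i ∈ range (2 * n), v i := by
    have := sum_range_succ_comm v (2 * n)
    rw [sum_range_succ', hv] at this
    linarith
  refine ⟨w, ?_⟩
  rw [sum_congr rfl fun i _ => slift_two_step_eq_add hr hr4 p hp i, sum_add_distrib]
  change ∑ i ∈ range (2 * n), v i + ∑ i ∈ range (2 * n), v (i + 1) = _
  rw [hshift, ← two_mul, hw]
  ring

end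

lemma sum_range_two_mul {M : Type*} [AddCommMonoid M] (f : ℕ → M) (n : ℕ) :
    ∑ i ∈ range (2 * n), f i =
      ∑ j ∈ range n, f (2 * j) + ∑ j ∈ range n, f (2 * j + 1) := by
  induction n with
  | zero => simp
  | succ n ih =>
    rw [mul_add, mul_one, sum_range_succ, sum_range_succ, ih, sum_range_succ, sum_range_succ]
    abel

theorem windingParity_even_cycle_general (m : ℕ) (r : ℝ) (hr : 0 < r) (hr4 : r < 4)
    (c : ZMod (2 * m) → AddCircle r)
    (hc : ∀ i : ZMod (2 * m), 1 ≤ dist (c i) (c (i + 1))) :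
    ∃ zo ze : ℤ,
      (∑ j ∈ Finset.range m,
          slift r hr (c ((2 * j + 3 : ℕ) : ZMod (2 * m)) - c ((2 * j + 1 : ℕ) : ZMod (2 * m))))
        = zo * r ∧
      (∑ j ∈ Finset.range m,
          slift r hr (c ((2 * j + 2 : ℕ) : ZMod (2 * m)) - c ((2 * j : ℕ) : ZMod (2 * m))))
        = ze * r ∧
      (Odd zo ↔ Odd ze) := by
  set p : ℕ → AddCircle r := fun i => c i
  have hper : Periodic p (2 * m) := fun i => by simp [p]
  have hstep : ∀ i, 1 ≤ ‖p (i + 1) - p i‖ := fun i => by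
    simpa [p, dist_eq_norm, norm_sub_rev] using hc i
  obtain ⟨zo, hzo⟩ := exists_sum_range_slift_sub_eq_mul hr (fun j => p (2 * j + 1)) (n := m)
    (by simpa [add_comm] using hper 1)
  obtain ⟨ze, hze⟩ := exists_sum_range_slift_sub_eq_mul hr (fun j => p (2 * j)) (n := m)
    (by simpa using hper 0)
  obtain ⟨w, hw⟩ := exists_sum_range_slift_two_step_eq hr hr4 p hstep hper
  have hsum : ((zo + ze : ℤ) : ℝ) * r = ((2 * w : ℤ) : ℝ) * r := by
    push_cast
    rw [add_mul, ← hzo, ← hze, add_comm, ← hw, sum_range_two_mul]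
    rfl
  have heven : Even (zo + ze) :=
    ⟨w, by rw [Int.cast_inj.mp (mul_right_cancel₀ hr.ne' hsum), two_mul]⟩
  exact ⟨zo, ze, hzo, hze, by
    rw [← Int.not_even_iff_odd, ← Int.not_even_iff_odd, Int.even_add.mp heven]⟩

/-- Let `n = 2m` be even, `r < 4`, and let `c` be a circular `r`-coloring of the all-negative
cycle `(C_n, -)`.  The two components of the exact square `C_n^{#2}` are the cycles through the
odd-indexed and the even-indexed vertices; the winding number of the shortest-arc extension of
`c` on such a cycle is the integer `z` with `∑ slift = z * r`, where the sum of the signed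
shortest displacements runs over the edges of the component.  These two winding numbers have
the same parity. -/
theorem windingParity_even_cycle (m : ℕ) (hm : 2 ≤ m) (r : ℝ) (hr : 0 < r) (hr4 : r < 4)
    (c : ZMod (2 * m) → AddCircle r)
    (hc : ∀ i : ZMod (2 * m), 1 ≤ dist (c i) (c (i + 1))) :
    ∃ zo ze : ℤ,
      (∑ j ∈ Finset.range m,
          slift r hr (c ((2 * j + 3 : ℕ) : ZMod (2 * m)) - c ((2 * j + 1 : ℕ) : ZMod (2 * m))))
        = zo * r ∧
      (∑ j ∈ Finset.range m,
          slift r hr (c ((2 * j + 2 : ℕ) : ZMod (2 * m)) - c ((2 * j : ℕ) : ZMod (2 * m))))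
        = ze * r ∧
      (Odd zo ↔ Odd ze) :=
  windingParity_even_cycle_general m r hr hr4 c hc
end

section
/- Let n = 2k+1 be odd, let r satisfy 2 + 1/k ≤ r < 4, and let c be a circular r-coloring of the all-negative cycle (C_n, −). Then the winding number of the shortest-arc extension of c on the exact square C_n^{#2} is odd. -/
open scoped Classical

/-!
Let `u j` be the shortest-arc lift of `c (j + 1) - c j + r / 2`, the arc from the antipode of
`c j` to `c (j + 1)`. As adjacent colours are at distance at least `1`, `|u j| ≤ r / 2 - 1`;
for `r < 4` two such arcs add up to less than a half-turn, so the shortest arc of the square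
edge from `c (2j)` to `c (2j + 2)` is exactly `u (2j) + u (2j + 1)`, the two half-turns
cancelling. Hence the square's total signed length is `2 ∑ u j`, while `∑ u j = n r / 2 + w r`
for some integer `w` because the walk `c 0, c 1, …, c n = c 0` is closed. The winding number
is therefore `n + 2w`, which is odd.
-/

open Finset

theorem Finset.sum_range_pair_eq_two_nsmul_of_periodic {M : Type*} [AddCommMonoid M]
    {f : ℕ → M} {n : ℕ} (hf : Function.Periodic f n) :
    ∑ j ∈ range n, (f (2 * j) + f (2 * j + 1)) = 2 • ∑ j ∈ range n, f j := by
  have hpairs (m : ℕ) :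
      ∑ j ∈ range m, (f (2 * j) + f (2 * j + 1)) = ∑ j ∈ range (2 * m), f j := by
    induction m with
    | zero => simp
    | succ m ih =>
      rw [sum_range_succ, ih, Nat.mul_succ, sum_range_succ, sum_range_succ, add_assoc]
  rw [hpairs, two_mul, sum_range_add, two_nsmul]
  simp only [add_comm n]
  exact congrArg _ (sum_congr rfl fun j _ ↦ hf j)

variable {r : ℝ}

namespace AddCircle

theorem slift_mem_Ioc (hr : 0 < r) (x : AddCircle r) :
    slift r hr x ∈ Set.Ioc (-(r / 2)) (r / 2) := by
  have : Fact (0 < r) := ⟨hr⟩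
  obtain ⟨h₁, h₂⟩ := (equivIoc r (-(r / 2)) x).2
  exact ⟨h₁, h₂.trans_eq (by ring)⟩

@[simp]
theorem coe_slift (hr : 0 < r) (x : AddCircle r) : (slift r hr x : AddCircle r) = x :=
  have : Fact (0 < r) := ⟨hr⟩
  coe_equivIoc

theorem slift_coe_of_mem (hr : 0 < r) {y : ℝ} (hy : y ∈ Set.Ioc (-(r / 2)) (r / 2)) :
    slift r hr y = y :=
  have : Fact (0 < r) := ⟨hr⟩
  equivIoc_coe_of_mem (by rwa [show -(r / 2) + r = r / 2 by ring])

theorem norm_coe_of_mem (hr : 0 < r) {y : ℝ} (hy : y ∈ Set.Icc (-(r / 2)) (r / 2)) :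
    ‖(y : AddCircle r)‖ = |y| := by
  rw [norm_coe_eq_abs_iff r hr.ne', abs_of_pos hr]
  exact abs_le.2 hy

theorem norm_eq_abs_slift (hr : 0 < r) (x : AddCircle r) : ‖x‖ = |slift r hr x| := by
  obtain ⟨h₁, h₂⟩ := slift_mem_Ioc hr x
  conv_lhs => rw [← coe_slift hr x]
  exact norm_coe_of_mem hr ⟨h₁.le, h₂⟩

theorem norm_add_half_period (hr : 0 < r) (x : AddCircle r) :
    ‖x + ((r / 2 : ℝ) : AddCircle r)‖ = r / 2 - ‖x‖ := by
  obtain ⟨h₁, h₂⟩ := slift_mem_Ioc hr x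
  rw [norm_eq_abs_slift hr x]
  conv_lhs => rw [← coe_slift hr x, ← coe_add]
  set s := slift r hr x
  rcases le_or_gt s 0 with hs | hs
  · rw [norm_coe_of_mem hr ⟨by linarith, by linarith⟩, abs_of_nonpos hs,
      abs_of_nonneg (by linarith)]
    ring
  · rw [show s + r / 2 = s - r / 2 + r by ring, coe_add_period,
      norm_coe_of_mem hr ⟨by linarith, by linarith⟩, abs_of_pos hs,
      abs_of_nonpos (by linarith)]
    ring

theorem slift_add_of_norm_add_norm_lt (hr : 0 < r) {x y : AddCircle r}
    (hxy : ‖x‖ + ‖y‖ < r / 2) : slift r hr (x + y) = slift r hr x + slift r hr y := by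
  rw [norm_eq_abs_slift hr, norm_eq_abs_slift hr] at hxy
  conv_lhs => rw [← coe_slift hr x, ← coe_slift hr y, ← coe_add]
  apply slift_coe_of_mem hr
  constructor <;> cases abs_lt.1 (lt_of_le_of_lt (abs_add_le _ _) hxy) <;> linarith

theorem slift_add_eq_of_one_le_norm (hr : 0 < r) (hr4 : r < 4) {x y : AddCircle r}
    (hx : 1 ≤ ‖x‖) (hy : 1 ≤ ‖y‖) :
    slift r hr (x + y) = slift r hr (x + ((r / 2 : ℝ) : AddCircle r)) +
      slift r hr (y + ((r / 2 : ℝ) : AddCircle r)) := by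
  have hhalf : ((r / 2 : ℝ) : AddCircle r) + ((r / 2 : ℝ) : AddCircle r) = 0 := by
    rw [← coe_add, add_halves, coe_period]
  have hsmall :
      ‖x + ((r / 2 : ℝ) : AddCircle r)‖ + ‖y + ((r / 2 : ℝ) : AddCircle r)‖ < r / 2 := by
    rw [norm_add_half_period hr, norm_add_half_period hr]
    linarith
  rw [← slift_add_of_norm_add_norm_lt hr hsmall]
  congr 1
  linear_combination (norm := abel_nf) -hhalf

end AddCircle

theorem exists_sum_slift_sub_add_eq (hr : 0 < r) {n : ℕ} (c : ZMod n → AddCircle r) (a : ℝ) :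
    ∃ w : ℤ, ∑ j ∈ range n, slift r hr (c (j + 1 : ℕ) - c j + a) = n * a + w * r := by
  have hcoe : ((∑ j ∈ range n, slift r hr (c (j + 1 : ℕ) - c j + a) - n * a : ℝ) :
      AddCircle r) = 0 := by
    rw [AddCircle.coe_sub, ← nsmul_eq_mul, AddCircle.coe_nsmul,
      QuotientAddGroup.mk_sum, sub_eq_zero]
    simp only [AddCircle.coe_slift, sum_add_distrib, sum_range_sub (fun j : ℕ ↦ c j),
      ZMod.natCast_self, Nat.cast_zero, sub_self, zero_add, sum_const, card_range]
  obtain ⟨w, hw⟩ := (AddCircle.coe_eq_zero_iff r).1 hcoe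
  exact ⟨w, by rw [zsmul_eq_mul] at hw; linarith⟩

theorem sum_slift_square_eq (hr : 0 < r) (hr4 : r < 4) {n : ℕ} (c : ZMod n → AddCircle r)
    (hc : ∀ i, 1 ≤ dist (c i) (c (i + 1))) :
    ∑ j ∈ range n, slift r hr (c (2 * j + 2 : ℕ) - c (2 * j : ℕ)) =
      2 * ∑ j ∈ range n, slift r hr (c (j + 1 : ℕ) - c j + ((r / 2 : ℝ) : AddCircle r)) := by
  set u : ℕ → ℝ := fun j ↦ slift r hr (c (j + 1 : ℕ) - c j + ((r / 2 : ℝ) : AddCircle r))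
  have hedge (j : ℕ) : 1 ≤ ‖c (j + 1 : ℕ) - c j‖ := by
    rw [← dist_eq_norm, dist_comm, Nat.cast_succ]
    exact hc j
  have hsquare (j : ℕ) :
      slift r hr (c (2 * j + 2 : ℕ) - c (2 * j : ℕ)) = u (2 * j) + u (2 * j + 1) := by
    rw [← sub_add_sub_cancel' (c (2 * j + 1 : ℕ)) (c (2 * j : ℕ))]
    exact AddCircle.slift_add_eq_of_one_le_norm hr hr4 (hedge _) (hedge _)
  have hu : Function.Periodic u n := fun j ↦ by simp [u]
  rw [sum_congr rfl fun j _ ↦ hsquare j, sum_range_pair_eq_two_nsmul_of_periodic hu, two_nsmul,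
    two_mul]

theorem windingOdd_circColoring_oddCycle_general (k : ℕ) (r : ℝ) (hr : 0 < r)
    (hr4 : r < 4)
    (c : ZMod (2 * k + 1) → AddCircle r)
    (hc : ∀ i : ZMod (2 * k + 1), 1 ≤ dist (c i) (c (i + 1))) :
    ∃ z : ℤ, Odd z ∧
      (∑ j ∈ Finset.range (2 * k + 1),
          slift r hr
            (c ((2 * j + 2 : ℕ) : ZMod (2 * k + 1)) - c ((2 * j : ℕ) : ZMod (2 * k + 1))))
        = z * r := by
  obtain ⟨w, hw⟩ := exists_sum_slift_sub_add_eq hr c (r / 2)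
  refine ⟨2 * k + 1 + 2 * w, ⟨k + w, by ring⟩, ?_⟩
  rw [sum_slift_square_eq hr hr4 c hc, hw]
  push_cast
  ring

/-- Let `n = 2k+1` be odd, `2 + 1/k ≤ r < 4`, and let `c` be a circular `r`-coloring of the
all-negative cycle `(C_n, -)`.  Then the winding number of the shortest-arc extension of `c`
on the exact square `C_n^{#2}` (the cycle visiting `c 0, c 2, c 4, …`), i.e. the integer `z`
with `∑ slift = z * r`, is odd. -/
theorem windingOdd_circColoring_oddCycle (k : ℕ) (hk : 1 ≤ k) (r : ℝ) (hr : 0 < r)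
    (hrlow : 2 + 1 / (k : ℝ) ≤ r) (hr4 : r < 4)
    (c : ZMod (2 * k + 1) → AddCircle r)
    (hc : ∀ i : ZMod (2 * k + 1), 1 ≤ dist (c i) (c (i + 1))) :
    ∃ z : ℤ, Odd z ∧
      (∑ j ∈ Finset.range (2 * k + 1),
          slift r hr
            (c ((2 * j + 2 : ℕ) : ZMod (2 * k + 1)) - c ((2 * j : ℕ) : ZMod (2 * k + 1))))
        = z * r :=
  windingOdd_circColoring_oddCycle_general k r hr hr4 c hc
end

section
/- Let c be a far-polar mapping of the even cycle C_{2k} to O_r with the directed (clockwise) extension c^D, let I be a generic interval, and call an edge green if its image under c^D crosses I and orange otherwise. Then the number of green edges has the same parity as the number of odd-indexed vertices incident to one green and one orange edge. -/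
open scoped Classical

/-- The clockwise (directed) arc from `x` to `y` on `O_r` — the image of the directed edge `xy`
under the directed extension `c^D` — contains the point `t` (standing for a generic small
interval `I`) in its interior.  Such an edge is called *green*; otherwise it is *orange*. -/
def CrossD (r : ℝ) (hr : 0 < r) (x y t : AddCircle r) : Prop :=
  0 < dlift r hr (t - x) ∧ dlift r hr (t - x) < dlift r hr (y - x)

/-- Let `c` be a far-polar mapping of the even cycle `C_{2k}` to `O_r`, and let `t` be a point
of `O_r` (a generic interval) avoiding all vertex images.  Call the edge from `v_i` to
`v_{i+1}` green if its clockwise arc crosses over `t`, and orange otherwise.  Then the number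
of green edges has the same parity as the number of odd-indexed vertices incident to one green
and one orange edge. -/
theorem greenCount_parity (k : ℕ) (hk : 1 ≤ k) (r : ℝ) (hr : 0 < r)
    (c : ZMod (2 * k) → AddCircle r) (hc : FarPolarCycle (2 * k) r hr c)
    (t : AddCircle r) (ht : ∀ i : ZMod (2 * k), t ≠ c i) :
    Nat.card {i : ZMod (2 * k) // CrossD r hr (c i) (c (i + 1)) t} % 2
      = Nat.card {i : ZMod (2 * k) // Odd i.val ∧
          ¬ (CrossD r hr (c (i - 1)) (c i) t ↔ CrossD r hr (c i) (c (i + 1)) t)} % 2 := by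
  haveI : NeZero (2 * k) := ⟨by omega⟩
  set g : ZMod (2 * k) → Prop := fun i => CrossD r hr (c i) (c (i + 1)) t with hg
  set f : ZMod (2 * k) → ZMod 2 := fun i => if g i then 1 else 0 with hf
  have h2 : (2 : ℕ) ∣ 2 * k := ⟨k, rfl⟩
  have hpar : ∀ i : ZMod (2 * k), (((i + 1).val : ZMod 2)) = (i.val : ZMod 2) + 1 := by
    intro i
    have := (ZMod.castHom h2 (ZMod 2)).map_add i 1
    rw [map_one] at this
    simpa [ZMod.castHom_apply, ZMod.natCast_val] using this
  have hodd : ∀ n : ℕ, Odd n ↔ (n : ZMod 2) = 1 := by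
    intro n
    rw [Nat.odd_iff, ← ZMod.natCast_mod n 2]
    rcases Nat.mod_two_eq_zero_or_one n with h | h <;> rw [h] <;> decide
  have key : ((Nat.card {i : ZMod (2*k) // g i} : ℕ) : ZMod 2)
      = ((Nat.card {i : ZMod (2*k) // Odd i.val ∧
          ¬ (CrossD r hr (c (i - 1)) (c i) t ↔ g i)} : ℕ) : ZMod 2) := by
    rw [Nat.card_eq_fintype_card, Nat.card_eq_fintype_card,
      Fintype.card_subtype, Fintype.card_subtype, ← Finset.sum_boole, ← Finset.sum_boole]
    have hterm : ∀ i : ZMod (2*k),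
        (if (Odd i.val ∧ ¬ (CrossD r hr (c (i - 1)) (c i) t ↔ g i)) then (1:ZMod 2) else 0)
          = if Odd i.val then f (i-1) + f i else 0 := by
      intro i
      have h1 : g (i-1) ↔ CrossD r hr (c (i-1)) (c i) t := by
        rw [hg]; simp [sub_add_cancel]
      by_cases ho : Odd i.val <;> by_cases hx : CrossD r hr (c (i-1)) (c i) t <;>
        by_cases hy : g i <;> simp [hf, ho, hx, hy, h1] <;> decide
    calc (∑ i : ZMod (2*k), if g i then (1:ZMod 2) else 0)
        = (∑ i ∈ Finset.univ.filter (fun i : ZMod (2*k) => Odd i.val), f i)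
          + ∑ i ∈ Finset.univ.filter (fun i : ZMod (2*k) => ¬ Odd i.val), f i := by
          rw [Finset.sum_filter_add_sum_filter_not]
      _ = (∑ i ∈ Finset.univ.filter (fun i : ZMod (2*k) => Odd i.val), f i)
          + ∑ i ∈ Finset.univ.filter (fun i : ZMod (2*k) => Odd i.val), f (i-1) := by
          congr 1
          refine Finset.sum_nbij' (fun i => i + 1) (fun j => j - 1) ?_ ?_ ?_ ?_ ?_ <;>
            intro a ha <;> simp_all only [Finset.mem_filter, Finset.mem_univ, true_and]
          · have h0 : ((a.val : ZMod 2)) = 0 := by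
              revert ha; generalize (a.val : ZMod 2) = x; revert x; decide
            rw [h0]; decide
          · have hq := hpar (a - 1)
            rw [sub_add_cancel, ha] at hq
            intro hcon
            rw [hcon] at hq
            revert hq; decide
          · exact add_sub_cancel_right a 1
          · exact sub_add_cancel a 1
          · rw [add_sub_cancel_right]
      _ = ∑ i ∈ Finset.univ.filter (fun i : ZMod (2*k) => Odd i.val), (f (i-1) + f i) := by
          rw [Finset.sum_add_distrib]; ring
      _ = ∑ i : ZMod (2*k), if Odd i.val then f (i-1) + f i else 0 := by
          rw [Finset.sum_filter]
      _ = _ := by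
          exact Finset.sum_congr rfl (fun i _ => (hterm i).symm)
  exact (ZMod.natCast_eq_natCast_iff _ _ _).mp key
end

section
/- For all positive integers ℓ and k, the circular chromatic number of the generalized Mycielski graph M_ℓ(C_{2k+1}) equals 4. -/
/-- Adjacency relation of the cylindrical grid `C_{ℓ×m}`: vertex `v_{i,j}` is adjacent to
`v_{i+1,j-1}` and `v_{i+1,j}` (second index mod `m`). -/
def gridRel (ℓ m : ℕ) (x y : Fin ℓ × ZMod m) : Prop :=
  (y.1 : ℕ) = (x.1 : ℕ) + 1 ∧ (y.2 = x.2 - 1 ∨ y.2 = x.2)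

/-- Generating relation for the generalized Mycielski graph `M_ℓ(C_{2k+1})`: the cylindrical
grid `C_{ℓ×(2k+1)}`, plus the edges `v_{1,j}v_{1,j+k}` on the first layer, plus a new vertex
`u` (encoded as `none`) adjacent to all vertices `v_{ℓ,j}` of the last layer. -/
def mycRel (ℓ k : ℕ) :
    Option (Fin ℓ × ZMod (2 * k + 1)) → Option (Fin ℓ × ZMod (2 * k + 1)) → Prop
  | some x, some y =>
      gridRel ℓ (2 * k + 1) x y ∨ ((x.1 : ℕ) = 0 ∧ (y.1 : ℕ) = 0 ∧ y.2 = x.2 + (k : ZMod (2 * k + 1)))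
  | some x, none => (x.1 : ℕ) = ℓ - 1
  | none, _ => False

/-- The generalized Mycielski graph `M_ℓ(C_{2k+1})`. -/
def MycGraph (ℓ k : ℕ) : SimpleGraph (Option (Fin ℓ × ZMod (2 * k + 1))) :=
  SimpleGraph.fromRel (mycRel ℓ k)

section AuxReal

lemma coe_toIcoMod' {r : ℝ} (hr0 : 0 < r) (x : ℝ) :
    ((toIcoMod hr0 0 x : ℝ) : AddCircle r) = (x : AddCircle r) := by
  rw [QuotientAddGroup.eq_iff_sub_mem, toIcoMod_sub_self]
  exact AddSubgroup.zsmul_mem_zmultiples r _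

lemma norm_bound {r : ℝ} (hr2 : 2 ≤ r) {x : ℝ} (h0 : 0 ≤ x) (hxr : x < r)
    (h1 : 1 ≤ ‖(x : AddCircle r)‖) : 1 ≤ x ∧ x ≤ r - 1 := by
  have hr0 : (0:ℝ) < r := by linarith
  rw [AddCircle.norm_eq] at h1
  set m : ℤ := round (r⁻¹ * x) with hm
  have hround := abs_sub_round (r⁻¹ * x)
  rw [← hm] at hround
  obtain ⟨hra, hrb⟩ := abs_le.mp hround
  have hu0 : 0 ≤ r⁻¹ * x := by positivity
  have hu1 : r⁻¹ * x < 1 := by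
    rw [← div_eq_inv_mul]; exact (div_lt_one hr0).mpr hxr
  have hxu : r * (r⁻¹ * x) = x := by field_simp
  have hm01 : m = 0 ∨ m = 1 := by
    have h1' : (-1 : ℝ) < (m : ℝ) := by linarith
    have h2' : (m : ℝ) < 2 := by linarith
    have h1'' : (-1 : ℤ) < m := by exact_mod_cast h1'
    have h2'' : m < 2 := by exact_mod_cast h2'
    omega
  rcases hm01 with h | h
  · rw [h] at h1 hra hrb
    simp at h1 hra hrb
    rw [abs_of_nonneg h0] at h1
    have hx2 : x ≤ r * (1/2) := by
      rw [← hxu]; exact mul_le_mul_of_nonneg_left (by linarith) (le_of_lt hr0)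
    exact ⟨h1, by linarith⟩
  · rw [h] at h1 hra hrb
    push_cast at h1 hra hrb
    have hxle : x - 1 * r ≤ 0 := by nlinarith
    rw [abs_of_nonpos hxle] at h1
    have hx2 : r * (1/2) ≤ x := by
      rw [← hxu]; exact mul_le_mul_of_nonneg_left (by linarith) (le_of_lt hr0)
    constructor <;> linarith

lemma sum_shift (n : ℕ) [NeZero n] {M : Type*} [AddCommMonoid M] (g : ZMod n → M) (t : ZMod n) :
    ∑ j : ZMod n, g (j + t) = ∑ j : ZMod n, g j :=
  Fintype.sum_equiv (Equiv.addRight t) _ _ (fun _ => rfl)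

lemma dist_lemma (m n : ℕ) (hm : m ≤ 3) (hn : n ≤ 3) (hmn : m ≠ n) :
    1 ≤ dist ((m:ℝ) : AddCircle (4:ℝ)) ((n:ℝ) : AddCircle (4:ℝ)) := by
  rw [dist_eq_norm, ← AddCircle.coe_sub, AddCircle.norm_eq]
  interval_cases m <;> interval_cases n <;> first | omega | norm_num [round_eq]

end AuxReal


section Adj

variable {ℓ k : ℕ}

def vtx (ℓ k : ℕ) (i : ℕ) (j : ZMod (2 * k + 1)) : Option (Fin ℓ × ZMod (2 * k + 1)) :=
  if h : i < ℓ then some (⟨i, h⟩, j) else none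

lemma vtx_apex (j : ZMod (2 * k + 1)) : vtx ℓ k ℓ j = none := by simp [vtx]

lemma adjA (hℓ : 1 ≤ ℓ) (i : ℕ) (j : ZMod (2 * k + 1)) (hi : i + 1 ≤ ℓ) :
    (MycGraph ℓ k).Adj (vtx ℓ k i j) (vtx ℓ k (i + 1) j) := by
  have hiℓ : i < ℓ := by omega
  rw [MycGraph, SimpleGraph.fromRel_adj]
  rcases lt_or_ge (i+1) ℓ with h | h
  · refine ⟨?_, Or.inl ?_⟩
    · simp only [vtx, dif_pos hiℓ, dif_pos h]
      simp [Fin.ext_iff]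
    · simp only [vtx, dif_pos hiℓ, dif_pos h]
      exact Or.inl ⟨rfl, Or.inr rfl⟩
  · have hieq : ¬ (i + 1 < ℓ) := by omega
    refine ⟨?_, Or.inl ?_⟩
    · simp [vtx, dif_pos hiℓ, dif_neg hieq]
    · simp only [vtx, dif_pos hiℓ, dif_neg hieq]
      show i = ℓ - 1
      omega

lemma adjB (hℓ : 1 ≤ ℓ) (i : ℕ) (j : ZMod (2 * k + 1)) (hi : i + 1 ≤ ℓ) :
    (MycGraph ℓ k).Adj (vtx ℓ k (i + 1) j) (vtx ℓ k i (j + 1)) := by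
  have hiℓ : i < ℓ := by omega
  rw [MycGraph, SimpleGraph.fromRel_adj]
  rcases lt_or_ge (i+1) ℓ with h | h
  · refine ⟨?_, Or.inr ?_⟩
    · simp only [vtx, dif_pos hiℓ, dif_pos h]
      simp [Fin.ext_iff]
    · simp only [vtx, dif_pos hiℓ, dif_pos h]
      exact Or.inl ⟨rfl, Or.inl (by ring)⟩
  · have hieq : ¬ (i + 1 < ℓ) := by omega
    refine ⟨?_, Or.inr ?_⟩
    · simp [vtx, dif_pos hiℓ, dif_neg hieq]
    · simp only [vtx, dif_pos hiℓ, dif_neg hieq]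
      show i = ℓ - 1
      omega

lemma adjC (hℓ : 1 ≤ ℓ) (hk : 1 ≤ k) (j : ZMod (2 * k + 1)) :
    (MycGraph ℓ k).Adj (vtx ℓ k 0 j) (vtx ℓ k 0 (j + (k : ZMod (2 * k + 1)))) := by
  have h0 : 0 < ℓ := hℓ
  have hkne : ((k : ℕ) : ZMod (2 * k + 1)) ≠ 0 := by
    intro h
    rw [ZMod.natCast_eq_zero_iff] at h
    have := Nat.le_of_dvd (by omega) h
    omega
  rw [MycGraph, SimpleGraph.fromRel_adj]
  refine ⟨?_, Or.inl ?_⟩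
  · simp only [vtx, dif_pos h0]
    intro hcontra
    apply hkne
    have : j = j + (k : ZMod (2 * k + 1)) := by
      simpa using congrArg (fun o => (Option.map Prod.snd o).getD 0) hcontra
    exact (left_eq_add.mp this)
  · simp only [vtx, dif_pos h0]
    exact Or.inr ⟨rfl, rfl, rfl⟩

lemma zmod_cycle (hk : 1 ≤ k) (j : ZMod (2 * k + 1)) :
    j + (k : ZMod (2 * k + 1)) + 1 + (k : ZMod (2 * k + 1)) = j := by
  have h := ZMod.natCast_self (2 * k + 1)
  push_cast at h
  linear_combination h

end Adj

section Color

def gcol (k : ℕ) (j : ZMod (2 * k + 1)) : ℕ :=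
  if j.val < k then 0 else if j.val < 2 * k then 1 else 2

lemma gcol_le (k : ℕ) (j : ZMod (2 * k + 1)) : gcol k j ≤ 2 := by
  unfold gcol; split_ifs <;> omega

lemma gcol_ne (k : ℕ) (hk : 1 ≤ k) (j : ZMod (2 * k + 1)) :
    gcol k (j + (k : ZMod (2 * k + 1))) ≠ gcol k j := by
  haveI : NeZero (2 * k + 1) := ⟨by omega⟩
  have hval : (j + (k : ZMod (2 * k + 1))).val = (j.val + k) % (2 * k + 1) := by
    rw [ZMod.val_add, ZMod.val_natCast_of_lt (by omega)]
  have hj : j.val < 2 * k + 1 := ZMod.val_lt j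
  unfold gcol
  rcases lt_or_ge (j.val + k) (2 * k + 1) with h | h
  · rw [hval, Nat.mod_eq_of_lt h]
    split_ifs <;> omega
  · have hmod : (j.val + k) % (2 * k + 1) = j.val + k - (2 * k + 1) := by
      rw [Nat.mod_eq_sub_mod h, Nat.mod_eq_of_lt (by omega)]
    rw [hval, hmod]
    split_ifs <;> omega

def mcol (ℓ k : ℕ) : Option (Fin ℓ × ZMod (2 * k + 1)) → ℕ
  | none => if ℓ = 1 then 3 else 1
  | some p => if (p.1 : ℕ) = 0 then gcol k p.2 else if (p.1 : ℕ) % 2 = 1 then 3 else 0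

lemma mcol_le (ℓ k : ℕ) (v : Option (Fin ℓ × ZMod (2 * k + 1))) : mcol ℓ k v ≤ 3 := by
  match v with
  | none =>
    show (if ℓ = 1 then 3 else 1) ≤ 3
    split_ifs <;> omega
  | some p =>
    have := gcol_le k p.2
    show (if (p.1 : ℕ) = 0 then gcol k p.2 else if (p.1 : ℕ) % 2 = 1 then 3 else 0) ≤ 3
    split_ifs <;> omega

lemma mcol_proper (ℓ k : ℕ) (hℓ : 1 ≤ ℓ) (hk : 1 ≤ k) :
    ∀ x y, mycRel ℓ k x y → mcol ℓ k x ≠ mcol ℓ k y := by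
  intro x y hrel
  match x, y with
  | some p, some q =>
    rcases hrel with ⟨hgrid, -⟩ | ⟨h0, h0', hchord⟩
    · have hgt : (q.1 : ℕ) = (p.1 : ℕ) + 1 := hgrid
      have hgle := gcol_le k p.2
      have hgle' := gcol_le k q.2
      show (if (p.1 : ℕ) = 0 then gcol k p.2 else if (p.1 : ℕ) % 2 = 1 then 3 else 0)
        ≠ (if (q.1 : ℕ) = 0 then gcol k q.2 else if (q.1 : ℕ) % 2 = 1 then 3 else 0)
      split_ifs <;> omega
    · show (if (p.1 : ℕ) = 0 then gcol k p.2 else if (p.1 : ℕ) % 2 = 1 then 3 else 0)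
        ≠ (if (q.1 : ℕ) = 0 then gcol k q.2 else if (q.1 : ℕ) % 2 = 1 then 3 else 0)
      rw [if_pos h0, if_pos h0', hchord]
      exact (gcol_ne k hk p.2).symm
  | some p, none =>
    have hi : (p.1 : ℕ) = ℓ - 1 := hrel
    have hgle := gcol_le k p.2
    show (if (p.1 : ℕ) = 0 then gcol k p.2 else if (p.1 : ℕ) % 2 = 1 then 3 else 0)
      ≠ (if ℓ = 1 then 3 else 1)
    split_ifs <;> omega
  | none, some _ => exact absurd hrel id
  | none, none => exact absurd hrel id

end Color

section Main

variable {ℓ k : ℕ} {r : ℝ}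

/-- The lifted "length" of an oriented edge. -/
noncomputable def del (hr0 : 0 < r) (c : Option (Fin ℓ × ZMod (2 * k + 1)) → AddCircle r)
    (u v : Option (Fin ℓ × ZMod (2 * k + 1))) : ℝ :=
  toIcoMod hr0 0 ((c v).out - (c u).out)

lemma del_coe (hr0 : 0 < r) (c : Option (Fin ℓ × ZMod (2 * k + 1)) → AddCircle r)
    (u v : Option (Fin ℓ × ZMod (2 * k + 1))) :
    ((del hr0 c u v : ℝ) : AddCircle r) = c v - c u := by
  rw [del, coe_toIcoMod', AddCircle.coe_sub, QuotientAddGroup.out_eq', QuotientAddGroup.out_eq']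

variable (c : Option (Fin ℓ × ZMod (2 * k + 1)) → AddCircle r)

lemma del_bounds (hr2 : 2 ≤ r)
    (hc : ∀ u v, (MycGraph ℓ k).Adj u v → 1 ≤ dist (c u) (c v)) (hr0 : 0 < r) {u v : Option (Fin ℓ × ZMod (2 * k + 1))}
    (h : (MycGraph ℓ k).Adj u v) : 1 ≤ del hr0 c u v ∧ del hr0 c u v ≤ r - 1 := by
  have hmem := toIcoMod_mem_Ico' hr0 ((c v).out - (c u).out)
  have hd := hc u v h
  rw [dist_comm, dist_eq_norm] at hd
  rw [show c v - c u = ((del hr0 c u v : ℝ) : AddCircle r) from (del_coe hr0 c u v).symm] at hd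
  exact norm_bound hr2 hmem.1 hmem.2 hd

lemma del_exists_int (hr0 : 0 < r) {x : ℝ} (hx : ((x : ℝ) : AddCircle r) = 0) :
    ∃ n : ℤ, x = n * r := by
  obtain ⟨n, hn⟩ := (AddCircle.coe_eq_zero_iff r).mp hx
  exact ⟨n, by rw [← hn, zsmul_eq_mul]⟩

lemma del_flip (hr2 : 2 ≤ r)
    (hc : ∀ u v, (MycGraph ℓ k).Adj u v → 1 ≤ dist (c u) (c v)) (hr0 : 0 < r) {u v : Option (Fin ℓ × ZMod (2 * k + 1))}
    (h : (MycGraph ℓ k).Adj u v) : del hr0 c u v + del hr0 c v u = r := by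
  have h1 := del_bounds c hr2 hc hr0 h
  have h2 := del_bounds c hr2 hc hr0 h.symm
  have hz : ((del hr0 c u v + del hr0 c v u : ℝ) : AddCircle r) = 0 := by
    rw [AddCircle.coe_add, del_coe, del_coe]; abel
  obtain ⟨n, hn⟩ := del_exists_int hr0 hz
  have hn1 : n = 1 := by
    have hub : (n : ℝ) * r < 2 * r := by rw [← hn]; linarith
    have hlb : 0 * r < (n : ℝ) * r := by rw [← hn]; linarith
    have h2' : (n : ℝ) < 2 := lt_of_mul_lt_mul_right (by linarith [hub]) (le_of_lt hr0)
    have h0' : (0 : ℝ) < (n : ℝ) := lt_of_mul_lt_mul_right (by linarith [hlb]) (le_of_lt hr0)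
    have : (0 : ℤ) < n := by exact_mod_cast h0'
    have : n < 2 := by exact_mod_cast h2'
    omega
  rw [hn1] at hn; rw [hn]; ring

lemma del_quad (hr2 : 2 ≤ r) (hr4 : r < 4)
    (hc : ∀ u v, (MycGraph ℓ k).Adj u v → 1 ≤ dist (c u) (c v)) (hr0 : 0 < r) {p q s t : Option (Fin ℓ × ZMod (2 * k + 1))}
    (hpq : (MycGraph ℓ k).Adj p q) (hqs : (MycGraph ℓ k).Adj q s)
    (hst : (MycGraph ℓ k).Adj s t) (htp : (MycGraph ℓ k).Adj t p) :
    del hr0 c p q + del hr0 c q s + del hr0 c s t + del hr0 c t p = 2 * r := by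
  have h1 := del_bounds c hr2 hc hr0 hpq
  have h2 := del_bounds c hr2 hc hr0 hqs
  have h3 := del_bounds c hr2 hc hr0 hst
  have h4 := del_bounds c hr2 hc hr0 htp
  have hz : ((del hr0 c p q + del hr0 c q s + del hr0 c s t + del hr0 c t p : ℝ) :
      AddCircle r) = 0 := by
    rw [AddCircle.coe_add, AddCircle.coe_add, AddCircle.coe_add,
      del_coe, del_coe, del_coe, del_coe]
    abel
  obtain ⟨n, hn⟩ := del_exists_int hr0 hz
  have hn2 : n = 2 := by
    have hub : (n : ℝ) * r < 3 * r := by rw [← hn]; linarith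
    have hlb : 1 * r < (n : ℝ) * r := by rw [← hn]; linarith
    have h3' : (n : ℝ) < 3 := lt_of_mul_lt_mul_right (by linarith [hub]) (le_of_lt hr0)
    have h1' : (1 : ℝ) < (n : ℝ) := lt_of_mul_lt_mul_right (by linarith [hlb]) (le_of_lt hr0)
    have : (1 : ℤ) < n := by exact_mod_cast h1'
    have : n < 3 := by exact_mod_cast h3'
    omega
  rw [hn2] at hn; rw [hn]; norm_num

/-- The winding sum of the zigzag closed walk between layers `i` and `i+1`. -/
noncomputable def Wz (hr0 : 0 < r) (c : Option (Fin ℓ × ZMod (2 * k + 1)) → AddCircle r)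
    (i : ℕ) : ℝ :=
  ∑ j : ZMod (2 * k + 1),
    (del hr0 c (vtx ℓ k i j) (vtx ℓ k (i + 1) j) +
     del hr0 c (vtx ℓ k (i + 1) j) (vtx ℓ k i (j + 1)))

/-- The winding sum of the chord odd cycle on layer `0`. -/
noncomputable def Dsum (hr0 : 0 < r) (c : Option (Fin ℓ × ZMod (2 * k + 1)) → AddCircle r) : ℝ :=
  ∑ j : ZMod (2 * k + 1),
    del hr0 c (vtx ℓ k 0 j) (vtx ℓ k 0 (j + (k : ZMod (2 * k + 1))))

lemma card_zmod : (Finset.univ : Finset (ZMod (2 * k + 1))).card = 2 * k + 1 := by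
  rw [Finset.card_univ, ZMod.card]

lemma W_last (hr2 : 2 ≤ r)
    (hc : ∀ u v, (MycGraph ℓ k).Adj u v → 1 ≤ dist (c u) (c v)) (hr0 : 0 < r) (hℓ : 1 ≤ ℓ) :
    Wz hr0 c (ℓ - 1) = (2 * k + 1 : ℕ) * r := by
  have hll : ℓ - 1 + 1 = ℓ := by omega
  have hterm : ∀ j : ZMod (2 * k + 1),
      del hr0 c (vtx ℓ k (ℓ - 1) j) (vtx ℓ k (ℓ - 1 + 1) j) +
        del hr0 c (vtx ℓ k (ℓ - 1 + 1) j) (vtx ℓ k (ℓ - 1) (j + 1)) =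
      del hr0 c (vtx ℓ k (ℓ - 1) j) none + del hr0 c none (vtx ℓ k (ℓ - 1) (j + 1)) := by
    intro j; simp only [hll, vtx_apex]
  rw [Wz, Finset.sum_congr rfl (fun j _ => hterm j), Finset.sum_add_distrib]
  rw [sum_shift (2 * k + 1) (fun j => del hr0 c none (vtx ℓ k (ℓ - 1) j)) 1]
  rw [← Finset.sum_add_distrib]
  have hterm2 : ∀ j : ZMod (2 * k + 1),
      del hr0 c (vtx ℓ k (ℓ - 1) j) none + del hr0 c none (vtx ℓ k (ℓ - 1) j) = r := by
    intro j
    have h := adjA hℓ (ℓ - 1) j (by omega)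
    rw [hll, vtx_apex] at h
    exact del_flip c hr2 hc hr0 h
  rw [Finset.sum_congr rfl (fun j _ => hterm2 j), Finset.sum_const, card_zmod, nsmul_eq_mul]

lemma W_step (hr2 : 2 ≤ r) (hr4 : r < 4)
    (hc : ∀ u v, (MycGraph ℓ k).Adj u v → 1 ≤ dist (c u) (c v)) (hr0 : 0 < r) (hℓ : 1 ≤ ℓ) (i : ℕ) (hi : i + 2 ≤ ℓ) :
    Wz hr0 c (i + 1) = Wz hr0 c i := by
  have key : ∀ j : ZMod (2 * k + 1),
      del hr0 c (vtx ℓ k (i + 1) j) (vtx ℓ k (i + 1 + 1) j) +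
        del hr0 c (vtx ℓ k (i + 1 + 1) j) (vtx ℓ k (i + 1) (j + 1)) =
      del hr0 c (vtx ℓ k i (j + 1)) (vtx ℓ k (i + 1) (j + 1)) +
        del hr0 c (vtx ℓ k (i + 1) j) (vtx ℓ k i (j + 1)) := by
    intro j
    have hq := del_quad c hr2 hr4 hc hr0
      (adjA hℓ (i + 1) j (by omega)) (adjB hℓ (i + 1) j (by omega))
      ((adjA hℓ i (j + 1) (by omega)).symm) ((adjB hℓ i j (by omega)).symm)
    have h4a := del_flip c hr2 hc hr0 (adjA hℓ i (j + 1) (by omega))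
    have h4b := del_flip c hr2 hc hr0 (adjB hℓ i j (by omega))
    linarith
  calc Wz hr0 c (i + 1)
      = ∑ j : ZMod (2 * k + 1),
          (del hr0 c (vtx ℓ k i (j + 1)) (vtx ℓ k (i + 1) (j + 1)) +
           del hr0 c (vtx ℓ k (i + 1) j) (vtx ℓ k i (j + 1))) :=
        Finset.sum_congr rfl (fun j _ => key j)
    _ = (∑ j : ZMod (2 * k + 1), del hr0 c (vtx ℓ k i (j + 1)) (vtx ℓ k (i + 1) (j + 1))) +
          ∑ j : ZMod (2 * k + 1), del hr0 c (vtx ℓ k (i + 1) j) (vtx ℓ k i (j + 1)) :=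
        Finset.sum_add_distrib
    _ = (∑ j : ZMod (2 * k + 1), del hr0 c (vtx ℓ k i j) (vtx ℓ k (i + 1) j)) +
          ∑ j : ZMod (2 * k + 1), del hr0 c (vtx ℓ k (i + 1) j) (vtx ℓ k i (j + 1)) := by
        congr 1
        exact sum_shift (2 * k + 1) (fun j => del hr0 c (vtx ℓ k i j) (vtx ℓ k (i + 1) j)) 1
    _ = Wz hr0 c i := Finset.sum_add_distrib.symm

lemma W_top (hr2 : 2 ≤ r) (hr4 : r < 4)
    (hc : ∀ u v, (MycGraph ℓ k).Adj u v → 1 ≤ dist (c u) (c v)) (hr0 : 0 < r)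
    (hℓ : 1 ≤ ℓ) (hk : 1 ≤ k) :
    Dsum hr0 c + Wz hr0 c 0 + Dsum hr0 c = (2 * k + 1 : ℕ) * (2 * r) := by
  have key : ∀ j : ZMod (2 * k + 1),
      del hr0 c (vtx ℓ k 0 j) (vtx ℓ k 0 (j + (k : ZMod (2 * k + 1)))) +
        del hr0 c (vtx ℓ k 0 (j + (k : ZMod (2 * k + 1)))) (vtx ℓ k (0 + 1) (j + (k : ZMod (2 * k + 1)))) +
        del hr0 c (vtx ℓ k (0 + 1) (j + (k : ZMod (2 * k + 1)))) (vtx ℓ k 0 (j + (k : ZMod (2 * k + 1)) + 1)) +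
        del hr0 c (vtx ℓ k 0 (j + (k : ZMod (2 * k + 1)) + 1)) (vtx ℓ k 0 j) = 2 * r := by
    intro j
    have h4 := adjC hℓ hk (j + (k : ZMod (2 * k + 1)) + 1)
    rw [zmod_cycle hk j] at h4
    exact del_quad c hr2 hr4 hc hr0 (adjC hℓ hk j)
      (adjA hℓ 0 (j + (k : ZMod (2 * k + 1))) (by omega)) (adjB hℓ 0 (j + (k : ZMod (2 * k + 1))) (by omega)) h4
  have hsum : ∑ j : ZMod (2 * k + 1),
      (del hr0 c (vtx ℓ k 0 j) (vtx ℓ k 0 (j + (k : ZMod (2 * k + 1)))) +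
        del hr0 c (vtx ℓ k 0 (j + (k : ZMod (2 * k + 1)))) (vtx ℓ k (0 + 1) (j + (k : ZMod (2 * k + 1)))) +
        del hr0 c (vtx ℓ k (0 + 1) (j + (k : ZMod (2 * k + 1)))) (vtx ℓ k 0 (j + (k : ZMod (2 * k + 1)) + 1)) +
        del hr0 c (vtx ℓ k 0 (j + (k : ZMod (2 * k + 1)) + 1)) (vtx ℓ k 0 j)) = (2 * k + 1 : ℕ) * (2 * r) := by
    rw [Finset.sum_congr rfl (fun j _ => key j), Finset.sum_const, card_zmod, nsmul_eq_mul]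
  rw [Finset.sum_add_distrib, Finset.sum_add_distrib, Finset.sum_add_distrib] at hsum
  have hS1 : ∑ j : ZMod (2 * k + 1), del hr0 c (vtx ℓ k 0 j) (vtx ℓ k 0 (j + (k : ZMod (2 * k + 1)))) =
      Dsum hr0 c := rfl
  have hS2 : ∑ j : ZMod (2 * k + 1),
      del hr0 c (vtx ℓ k 0 (j + (k : ZMod (2 * k + 1)))) (vtx ℓ k (0 + 1) (j + (k : ZMod (2 * k + 1)))) =
      ∑ j : ZMod (2 * k + 1), del hr0 c (vtx ℓ k 0 j) (vtx ℓ k (0 + 1) j) :=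
    sum_shift (2 * k + 1) (fun j => del hr0 c (vtx ℓ k 0 j) (vtx ℓ k (0 + 1) j)) (k : ZMod (2 * k + 1))
  have hS3 : ∑ j : ZMod (2 * k + 1),
      del hr0 c (vtx ℓ k (0 + 1) (j + (k : ZMod (2 * k + 1)))) (vtx ℓ k 0 (j + (k : ZMod (2 * k + 1)) + 1)) =
      ∑ j : ZMod (2 * k + 1), del hr0 c (vtx ℓ k (0 + 1) j) (vtx ℓ k 0 (j + 1)) :=
    sum_shift (2 * k + 1) (fun j => del hr0 c (vtx ℓ k (0 + 1) j) (vtx ℓ k 0 (j + 1))) (k : ZMod (2 * k + 1))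
  have hS4 : ∑ j : ZMod (2 * k + 1), del hr0 c (vtx ℓ k 0 (j + (k : ZMod (2 * k + 1)) + 1)) (vtx ℓ k 0 j) =
      Dsum hr0 c := by
    have hstep : ∀ j : ZMod (2 * k + 1),
        del hr0 c (vtx ℓ k 0 (j + (k : ZMod (2 * k + 1)) + 1)) (vtx ℓ k 0 j) =
        del hr0 c (vtx ℓ k 0 (j + ((k : ZMod (2 * k + 1)) + 1)))
          (vtx ℓ k 0 (j + ((k : ZMod (2 * k + 1)) + 1) + (k : ZMod (2 * k + 1)))) := by
      intro j
      rw [← add_assoc]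
      rw [show j + (k : ZMod (2 * k + 1)) + 1 + (k : ZMod (2 * k + 1)) = j from zmod_cycle hk j]
    rw [Finset.sum_congr rfl (fun j _ => hstep j)]
    exact sum_shift (2 * k + 1)
      (fun j => del hr0 c (vtx ℓ k 0 j) (vtx ℓ k 0 (j + (k : ZMod (2 * k + 1)))))
      ((k : ZMod (2 * k + 1)) + 1)
  rw [hS1, hS2, hS3, hS4] at hsum
  have hW0 : Wz hr0 c 0 =
      (∑ j : ZMod (2 * k + 1), del hr0 c (vtx ℓ k 0 j) (vtx ℓ k (0 + 1) j)) +
        ∑ j : ZMod (2 * k + 1), del hr0 c (vtx ℓ k (0 + 1) j) (vtx ℓ k 0 (j + 1)) :=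
    Finset.sum_add_distrib
  linarith [hsum, hW0]

lemma D_int (hr0 : 0 < r) : ∃ N : ℤ, Dsum hr0 c = N * r := by
  apply del_exists_int hr0
  have hmap : ((Dsum hr0 c : ℝ) : AddCircle r) =
      ∑ j : ZMod (2 * k + 1),
        ((del hr0 c (vtx ℓ k 0 j) (vtx ℓ k 0 (j + (k : ZMod (2 * k + 1)))) : ℝ) :
          AddCircle r) :=
    map_sum (QuotientAddGroup.mk' (AddSubgroup.zmultiples r)) _ Finset.univ
  rw [hmap]
  have : ∀ j : ZMod (2 * k + 1),
      ((del hr0 c (vtx ℓ k 0 j) (vtx ℓ k 0 (j + (k : ZMod (2 * k + 1)))) : ℝ) : AddCircle r) =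
      c (vtx ℓ k 0 (j + (k : ZMod (2 * k + 1)))) - c (vtx ℓ k 0 j) := fun j => del_coe hr0 c _ _
  rw [Finset.sum_congr rfl (fun j _ => this j), Finset.sum_sub_distrib]
  rw [sum_shift (2 * k + 1) (fun j => c (vtx ℓ k 0 j)) (k : ZMod (2 * k + 1))]
  exact sub_self _

lemma no_coloring (hℓ : 1 ≤ ℓ) (hk : 1 ≤ k) (hr2 : 2 ≤ r) (hr4 : r < 4)
    (hc : ∀ u v, (MycGraph ℓ k).Adj u v → 1 ≤ dist (c u) (c v)) : False := by
  have hr0 : (0 : ℝ) < r := by linarith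
  have hmono : ∀ n : ℕ, n + 1 ≤ ℓ → Wz hr0 c n = Wz hr0 c 0 := by
    intro n
    induction n with
    | zero => intro _; rfl
    | succ m ih =>
      intro h
      rw [W_step c hr2 hr4 hc hr0 hℓ m (by omega), ih (by omega)]
  have hW0 : Wz hr0 c 0 = (2 * k + 1 : ℕ) * r := by
    rw [← hmono (ℓ - 1) (by omega), W_last c hr2 hc hr0 hℓ]
  have htop := W_top c hr2 hr4 hc hr0 hℓ hk
  obtain ⟨N, hN⟩ := D_int c hr0
  have h2D : 2 * ((N : ℝ) * r) = (2 * k + 1 : ℕ) * r := by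
    rw [← hN]; rw [hW0] at htop; push_cast at htop ⊢; linarith
  have hcast : (2 * N : ℝ) = ((2 * k + 1 : ℕ) : ℝ) := by
    have := mul_right_cancel₀ (ne_of_gt hr0) (by linarith [h2D] :
      (2 * (N : ℝ)) * r = ((2 * k + 1 : ℕ) : ℝ) * r)
    push_cast at this ⊢; linarith
  have hint : (2 * N : ℤ) = (2 * k + 1 : ℕ) := by exact_mod_cast hcast
  omega

end Main


/-- For all positive integers `ℓ` and `k`, the circular chromatic number of the generalized
Mycielski graph `M_ℓ(C_{2k+1})` equals `4`:  the infimum of the real numbers `r ≥ 2` such that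
the vertices can be mapped to the circle `O_r` of circumference `r` (modelled as
`AddCircle r`) with adjacent vertices at distance at least `1` is `4`. -/
theorem chiC_Mycielski (ℓ k : ℕ) (hℓ : 1 ≤ ℓ) (hk : 1 ≤ k) :
    sInf {r : ℝ | 2 ≤ r ∧ ∃ c : Option (Fin ℓ × ZMod (2 * k + 1)) → AddCircle r,
      ∀ u v, (MycGraph ℓ k).Adj u v → 1 ≤ dist (c u) (c v)} = 4 := by
  apply IsLeast.csInf_eq
  constructor
  · refine ⟨by norm_num, fun v => (((mcol ℓ k v : ℕ) : ℝ) : AddCircle (4 : ℝ)), ?_⟩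
    intro u v huv
    rw [MycGraph, SimpleGraph.fromRel_adj] at huv
    obtain ⟨hne, h | h⟩ := huv
    · exact dist_lemma _ _ (mcol_le ℓ k u) (mcol_le ℓ k v) (mcol_proper ℓ k hℓ hk u v h)
    · exact dist_lemma _ _ (mcol_le ℓ k u) (mcol_le ℓ k v)
        (Ne.symm (mcol_proper ℓ k hℓ hk v u h))
  · rintro s ⟨hs2, cc, hcc⟩
    by_contra hlt
    push_neg at hlt
    exact no_coloring cc hℓ hk hs2 hlt hcc
end
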